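/- Let G be the set of partitions of {1,...,m} having exactly one non-singleton block, that block having size congruent to 1 mod k (and size > 1). For a, b ∈ G with non-singleton blocks A, B respectively, the blocks A and B are disjoint if and only if a and b have a unique minimal upper bound in Π^(k)_m and this minimal upper bound is not in G. -/

import Mathlib

open Classical Set
noncomputable section

/-- The partition of `Fin m` whose only (possibly) non-singleton block is `B`. -/
def blockSetoid {m : ℕ} (B : Set (Fin m)) : Setoid (Fin m) :=
  ⟨fun x y => x = y ∨ (x ∈ B ∧ y ∈ B), by
    refine ⟨fun x => Or.inl rfl, ?_, ?_⟩
    · rintro x y (h | h)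
      · exact Or.inl h.symm
      · exact Or.inr ⟨h.2, h.1⟩
    · rintro x y z (h1 | h1) (h2 | h2)
      · exact Or.inl (h1.trans h2)
      · subst h1; exact Or.inr h2
      · subst h2; exact Or.inr h1
      · exact Or.inr ⟨h1.1, h2.2⟩⟩

/-- `Π^(k)_m`: partitions of `{1,…,m}` all of whose blocks have size ≡ 1 (mod k). -/
def Pik (k m : ℕ) : Set (Setoid (Fin m)) :=
  {s | ∀ c ∈ s.classes, c.ncard ≡ 1 [MOD k]}

/-- `I`: partitions with exactly one non-singleton block (the minimal building set of `Π_m`). -/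
def BSI (m : ℕ) : Set (Setoid (Fin m)) :=
  {s | ∃ B : Set (Fin m), 2 ≤ B.ncard ∧ s = blockSetoid B}

/-- `G`: partitions with exactly one non-singleton block, of size ≡ 1 (mod k). -/
def BSG (k m : ℕ) : Set (Setoid (Fin m)) :=
  {s | ∃ B : Set (Fin m), 2 ≤ B.ncard ∧ B.ncard ≡ 1 [MOD k] ∧ s = blockSetoid B}

/-- `z` is a minimal upper bound of the set `A` within the subposet `P`. -/
def IsMinUB {L : Type*} [PartialOrder L] (P : Set L) (A : Set L) (z : L) : Prop :=
  z ∈ P ∧ (∀ a ∈ A, a ≤ z) ∧ ∀ w ∈ P, (∀ a ∈ A, a ≤ w) → w ≤ z → w = z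

/-- Maximal elements of `S` lying below `x`. -/
def maxBelow {L : Type*} [PartialOrder L] (S : Set L) (x : L) : Set L :=
  {g ∈ S | g ≤ x ∧ ∀ g' ∈ S, g' ≤ x → g ≤ g' → g = g'}

/-- The support of a partition: union of its non-singleton blocks. -/
def suppPart {m : ℕ} (s : Setoid (Fin m)) : Set (Fin m) :=
  {x | ∃ y, x ≠ y ∧ s x y}

/-!
If `A` and `B` are disjoint, the partition with blocks `A` and `B` is their join in the full
partition lattice and lies in `Π^(k)_m`, so it is the unique minimal upper bound there; having two
non-singleton blocks, it is not in `G`. If `A` and `B` share a point `p`, a minimal upper bound `z`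
lies above the one-block partition whose block is the `z`-class `C` of `p`, which is itself an
upper bound in `Π^(k)_m` (`C` is a block of `z`); minimality forces `z` to be that partition,
which is in `G`.
-/

theorem IsMinUB.of_isLUB {L : Type*} [PartialOrder L] {P S : Set L} {x : L}
    (hx : IsLUB S x) (hxP : x ∈ P) : IsMinUB P S x :=
  ⟨hxP, hx.1, fun _ _ hw hwx => le_antisymm hwx (hx.2 hw)⟩

theorem IsMinUB.eq_of_isLUB {L : Type*} [PartialOrder L] {P S : Set L} {x z : L}
    (hx : IsLUB S x) (hxP : x ∈ P) (hz : IsMinUB P S z) : z = x :=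
  (hz.2.2 x hxP hx.1 (hx.2 hz.2.1)).symm

section Partitions

variable {m k : ℕ}

theorem mem_Pik_of_forall_class {s : Setoid (Fin m)}
    (h : ∀ y, {x | s x y} = {y} ∨ {x | s x y}.ncard ≡ 1 [MOD k]) : s ∈ Pik k m := by
  rintro c ⟨y, rfl⟩
  rcases h y with h | h
  · rw [h, ncard_singleton]
  · exact h

theorem blockSetoid_le_iff {B : Set (Fin m)} {s : Setoid (Fin m)} :
    blockSetoid B ≤ s ↔ ∀ x ∈ B, ∀ y ∈ B, s x y := by
  refine ⟨fun h x hx y hy => h (Or.inr ⟨hx, hy⟩), fun h x y hxy => ?_⟩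
  rcases hxy with rfl | ⟨hx, hy⟩
  exacts [s.refl' x, h x hx y hy]

theorem blockSetoid_mono {B C : Set (Fin m)} (h : B ⊆ C) : blockSetoid B ≤ blockSetoid C :=
  blockSetoid_le_iff.2 fun _ hx _ hy => Or.inr ⟨h hx, h hy⟩

theorem blockSetoid_mem_Pik {B : Set (Fin m)} (hB : B.ncard ≡ 1 [MOD k]) :
    blockSetoid B ∈ Pik k m := by
  refine mem_Pik_of_forall_class fun y => ?_
  by_cases hy : y ∈ B
  · right
    convert hB using 2
    ext x
    exact ⟨fun h => h.elim (· ▸ hy) And.left, fun hx => Or.inr ⟨hx, hy⟩⟩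
  · left
    ext x
    exact ⟨fun h => h.elim id fun h => absurd h.2 hy, fun h => Or.inl h⟩

theorem mem_of_blockSetoid_rel {C : Set (Fin m)} {x y : Fin m} (h : blockSetoid C x y)
    (hxy : x ≠ y) : x ∈ C ∧ y ∈ C :=
  h.resolve_left hxy

def twoBlock (A B : Set (Fin m)) (h : Disjoint A B) : Setoid (Fin m) :=
  ⟨fun x y => x = y ∨ (x ∈ A ∧ y ∈ A) ∨ (x ∈ B ∧ y ∈ B), by
    have := disjoint_left.1 h
    refine ⟨fun x => Or.inl rfl, ?_, ?_⟩
    · rintro x y (rfl | ⟨hx, hy⟩ | ⟨hx, hy⟩) <;> tauto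
    · rintro x y z (rfl | ⟨hx, hy⟩ | ⟨hx, hy⟩) (rfl | ⟨hy', hz⟩ | ⟨hy', hz⟩) <;> grind⟩

theorem twoBlock_rel {A B : Set (Fin m)} (h : Disjoint A B) {x y : Fin m} :
    twoBlock A B h x y ↔ x = y ∨ (x ∈ A ∧ y ∈ A) ∨ (x ∈ B ∧ y ∈ B) :=
  Iff.rfl

theorem isLUB_twoBlock {A B : Set (Fin m)} (h : Disjoint A B) :
    IsLUB {blockSetoid A, blockSetoid B} (twoBlock A B h) := by
  refine ⟨?_, fun w hw x y hxy => ?_⟩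
  · rintro s (rfl | rfl) <;> refine blockSetoid_le_iff.2 fun x hx y hy => ?_
    exacts [Or.inr (Or.inl ⟨hx, hy⟩), Or.inr (Or.inr ⟨hx, hy⟩)]
  · rcases hxy with rfl | hA | hB
    · exact w.refl' x
    · exact hw (mem_insert _ _) (Or.inr hA)
    · exact hw (mem_insert_of_mem _ rfl) (Or.inr hB)

theorem twoBlock_mem_Pik {A B : Set (Fin m)} (h : Disjoint A B)
    (hA : A.ncard ≡ 1 [MOD k]) (hB : B.ncard ≡ 1 [MOD k]) : twoBlock A B h ∈ Pik k m := by
  have := disjoint_left.1 h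
  refine mem_Pik_of_forall_class fun y => ?_
  by_cases hyA : y ∈ A
  · right
    convert hA using 2
    ext x
    simp only [twoBlock_rel, mem_ofPred_eq]
    grind
  by_cases hyB : y ∈ B
  · right
    convert hB using 2
    ext x
    simp only [twoBlock_rel, mem_ofPred_eq]
    grind
  · left
    ext x
    simp only [twoBlock_rel, mem_ofPred_eq, mem_singleton_iff]
    grind

theorem twoBlock_notMem_BSG {A B : Set (Fin m)} (h : Disjoint A B)
    (hA : 2 ≤ A.ncard) (hB : 2 ≤ B.ncard) : twoBlock A B h ∉ BSG k m := by
  rintro ⟨C, -, -, hC⟩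
  obtain ⟨a, ha, a', ha', haa'⟩ := one_lt_ncard_iff_nontrivial.1 hA
  obtain ⟨b, hb, b', hb', hbb'⟩ := one_lt_ncard_iff_nontrivial.1 hB
  have haC : a ∈ C :=
    (mem_of_blockSetoid_rel (hC ▸ (twoBlock_rel h).2 (Or.inr (Or.inl ⟨ha, ha'⟩))) haa').1
  have hbC : b ∈ C :=
    (mem_of_blockSetoid_rel (hC ▸ (twoBlock_rel h).2 (Or.inr (Or.inr ⟨hb, hb'⟩))) hbb').1
  have hab : twoBlock A B h a b := hC ▸ Or.inr ⟨haC, hbC⟩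
  have := disjoint_left.1 h
  rcases hab with rfl | ⟨-, hbA⟩ | ⟨haB, -⟩ <;> grind

theorem IsMinUB.mem_BSG_of_mem_inter {A B : Set (Fin m)} {z : Setoid (Fin m)} {p : Fin m}
    (hz : IsMinUB (Pik k m) {blockSetoid A, blockSetoid B} z)
    (hA : 2 ≤ A.ncard) (hpA : p ∈ A) (hpB : p ∈ B) : z ∈ BSG k m := by
  obtain ⟨hzP, hzub, hzmin⟩ := hz
  set C := {x | z x p}
  have hAC : A ⊆ C := fun x hx => hzub _ (mem_insert _ _) (Or.inr ⟨hx, hpA⟩)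
  have hBC : B ⊆ C := fun x hx => hzub _ (mem_insert_of_mem _ rfl) (Or.inr ⟨hx, hpB⟩)
  have hCk : C.ncard ≡ 1 [MOD k] := hzP _ ⟨p, rfl⟩
  have hCz : blockSetoid C ≤ z :=
    blockSetoid_le_iff.2 fun x hx y hy => z.trans' hx (z.symm' hy)
  have hCub : ∀ s ∈ ({blockSetoid A, blockSetoid B} : Set (Setoid (Fin m))),
      s ≤ blockSetoid C := by
    rintro s (rfl | rfl)
    exacts [blockSetoid_mono hAC, blockSetoid_mono hBC]
  exact ⟨C, hA.trans (ncard_le_ncard hAC), hCk,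
    (hzmin _ (blockSetoid_mem_Pik hCk) hCub hCz).symm⟩

end Partitions

theorem stmt2_general (k m : ℕ) (A B : Set (Fin m))
    (hA : 2 ≤ A.ncard) (hA' : A.ncard ≡ 1 [MOD k])
    (hB : 2 ≤ B.ncard) (hB' : B.ncard ≡ 1 [MOD k]) :
    Disjoint A B ↔
      ((∃! z, IsMinUB (Pik k m) {blockSetoid A, blockSetoid B} z) ∧
        ∀ z, IsMinUB (Pik k m) {blockSetoid A, blockSetoid B} z → z ∉ BSG k m) := by
  constructor
  · intro h
    have hlub := isLUB_twoBlock h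
    have hP := twoBlock_mem_Pik h hA' hB'
    refine ⟨⟨_, .of_isLUB hlub hP, fun z hz => hz.eq_of_isLUB hlub hP⟩, fun z hz => ?_⟩
    rw [hz.eq_of_isLUB hlub hP]
    exact twoBlock_notMem_BSG h hA hB
  · rintro ⟨⟨z, hz, -⟩, hnot⟩
    by_contra hAB
    obtain ⟨p, hpA, hpB⟩ := not_disjoint_iff.1 hAB
    exact hnot z hz (hz.mem_BSG_of_mem_inter hA hpA hpB)

/-- For `a b : BSG k m` with non-singleton blocks `A`, `B`:
`A` and `B` are disjoint iff `a` and `b` have a unique minimal upper bound in `Pik k m`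
and this minimal upper bound is not in `BSG k m`. -/
theorem stmt2 (k m : ℕ) (hk : 1 ≤ k) (A B : Set (Fin m))
    (hA : 2 ≤ A.ncard) (hA' : A.ncard ≡ 1 [MOD k])
    (hB : 2 ≤ B.ncard) (hB' : B.ncard ≡ 1 [MOD k]) :
    Disjoint A B ↔
      ((∃! z, IsMinUB (Pik k m) {blockSetoid A, blockSetoid B} z) ∧
        ∀ z, IsMinUB (Pik k m) {blockSetoid A, blockSetoid B} z → z ∉ BSG k m) :=
  stmt2_general k m A B hA hA' hB hB'
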